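/- arXiv:1810.03797 — 3 statements merged into one kernel-verified Lean document; each statement's English description precedes it below -/
import Mathlib

section
/- Fix h > 0 and F ∈ ℂ with a := Re F > 0. Let u : (0,∞) → ℂ be continuous and square-integrable, and define v(x) = h^{-1}∫₀ˣ u(t)·e^{(t−x)F/h} dt for x > 0. Then: (i) v is continuously differentiable on (0,∞) and satisfies F·v + h·v′ = u (i.e. v is a right inverse image of u under the operator J = F + h∂_x); (ii) ‖v‖_{L²(0,∞)} ≤ a^{-1}·‖u‖_{L²(0,∞)}; and (iii) ‖h·v′‖_{L²(0,∞)} ≤ (1 + |F|/a)·‖u‖_{L²(0,∞)}. In particular v lies in L²(0,∞) with semiclassical H¹ norm ‖v‖_{L²} + ‖h v′‖_{L²} ≤ (1 + a^{-1} + |F|/a)‖u‖_{L²(0,∞)}. -/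
/-!
Writing `v = J⁻¹ u` as `v(x) = ∫ k(x - t) u(t) dt` with the causal kernel `k(s) = h⁻¹ e^{-sF/h}` for
`s ≥ 0`, we have `|k(s)| = h⁻¹ e^{-s Re F / h}`, whose integral is `(Re F)⁻¹`. Cauchy–Schwarz
against the measure `|k(x - t)| dt` followed by Tonelli (Schur's test) gives
`‖v‖_{L²} ≤ (Re F)⁻¹ ‖u‖_{L²}`. Differentiating under the integral shows `F v + h v' = u`, so
`‖h v'‖ = ‖u - F v‖ ≤ (1 + |F| / Re F) ‖u‖`.
-/

open MeasureTheory Set Filter Topology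
open scoped ENNReal

namespace ENNReal

theorem sq_lintegral_mul_le {α : Type*} [MeasurableSpace α] {μ : Measure α} {w g : α → ℝ≥0∞}
    (hw : AEMeasurable w μ) (hg : AEMeasurable g μ) :
    (∫⁻ t, w t * g t ∂μ) ^ 2 ≤ (∫⁻ t, w t ∂μ) * ∫⁻ t, w t * g t ^ 2 ∂μ := by
  have key : ∀ t, w t * g t = w t ^ (1 / 2 : ℝ) * (w t * g t ^ 2) ^ (1 / 2 : ℝ) := fun t => by
    rw [← ENNReal.mul_rpow_of_nonneg _ _ (by norm_num), ← mul_assoc, ← sq, ← mul_pow,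
      ← ENNReal.rpow_natCast, ← ENNReal.rpow_mul]
    norm_num
  have holder := lintegral_mul_norm_pow_le (f := w) (g := fun t => w t * g t ^ 2) hw
    (hw.mul (hg.pow_const 2)) (p := 1 / 2) (q := 1 / 2) (by norm_num) (by norm_num) (by norm_num)
  simp only [← key] at holder
  calc (∫⁻ t, w t * g t ∂μ) ^ 2
      ≤ ((∫⁻ t, w t ∂μ) ^ (1 / 2 : ℝ) * (∫⁻ t, w t * g t ^ 2 ∂μ) ^ (1 / 2 : ℝ)) ^ 2 := by
        gcongr
    _ = (∫⁻ t, w t ∂μ) * ∫⁻ t, w t * g t ^ 2 ∂μ := by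
        rw [mul_pow, ← ENNReal.rpow_natCast, ← ENNReal.rpow_natCast, ← ENNReal.rpow_mul,
          ← ENNReal.rpow_mul]
        norm_num

end ENNReal

theorem lintegral_sq_lintegral_kernel_mul_le {α β : Type*} [MeasurableSpace α] [MeasurableSpace β]
    {μ : Measure α} {ν : Measure β} [SFinite μ] [SFinite ν] {K : α → β → ℝ≥0∞}
    (hK : Measurable (Function.uncurry K)) {g : β → ℝ≥0∞} (hg : AEMeasurable g ν) {A B : ℝ≥0∞}
    (hA : ∀ x, ∫⁻ t, K x t ∂ν ≤ A) (hB : ∀ t, ∫⁻ x, K x t ∂μ ≤ B) :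
    ∫⁻ x, (∫⁻ t, K x t * g t ∂ν) ^ 2 ∂μ ≤ A * B * ∫⁻ t, g t ^ 2 ∂ν := by
  have hKg : AEMeasurable (Function.uncurry fun x t => K x t * g t ^ 2) (μ.prod ν) :=
    hK.aemeasurable.mul (hg.pow_const 2).comp_snd
  have hKx : AEMeasurable (fun x => ∫⁻ t, K x t * g t ^ 2 ∂ν) μ := hKg.lintegral_prod_right'
  calc ∫⁻ x, (∫⁻ t, K x t * g t ∂ν) ^ 2 ∂μ
      ≤ ∫⁻ x, A * ∫⁻ t, K x t * g t ^ 2 ∂ν ∂μ := lintegral_mono fun x =>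
        (ENNReal.sq_lintegral_mul_le (hK.comp measurable_prodMk_left).aemeasurable hg).trans
          (mul_le_mul_left (hA x) _)
    _ = A * ∫⁻ t, (∫⁻ x, K x t ∂μ) * g t ^ 2 ∂ν := by
        rw [lintegral_const_mul'' _ hKx, lintegral_lintegral_swap hKg]
        congr 1
        refine lintegral_congr fun t => ?_
        exact lintegral_mul_const'' _ (hK.comp measurable_prodMk_right).aemeasurable
    _ ≤ A * (B * ∫⁻ t, g t ^ 2 ∂ν) := by
        rw [← lintegral_const_mul'' _ (hg.pow_const 2)]
        gcongr with t
        exact hB t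
    _ = A * B * ∫⁻ t, g t ^ 2 ∂ν := (mul_assoc _ _ _).symm

theorem sq_eLpNorm_two_eq_lintegral {α E : Type*} [MeasurableSpace α] [NormedAddCommGroup E]
    {μ : Measure α} (f : α → E) : eLpNorm f 2 μ ^ 2 = ∫⁻ x, ‖f x‖ₑ ^ 2 ∂μ := by
  simpa using eLpNorm_nnreal_pow_eq_lintegral (f := f) (μ := μ) (p := 2) two_ne_zero

theorem sq_eLpNorm_two_le_of_enorm_le_lintegral_kernel {α β E G : Type*} [MeasurableSpace α]
    [MeasurableSpace β] [NormedAddCommGroup E] [NormedAddCommGroup G]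
    {μ : Measure α} {ν : Measure β} [SFinite μ] [SFinite ν] {K : α → β → ℝ≥0∞}
    (hK : Measurable (Function.uncurry K)) {A B : ℝ≥0∞}
    (hA : ∀ x, ∫⁻ t, K x t ∂ν ≤ A) (hB : ∀ t, ∫⁻ x, K x t ∂μ ≤ B)
    {f : α → E} {g : β → G} (hg : AEStronglyMeasurable g ν)
    (hf : ∀ᵐ x ∂μ, ‖f x‖ₑ ≤ ∫⁻ t, K x t * ‖g t‖ₑ ∂ν) :
    eLpNorm f 2 μ ^ 2 ≤ A * B * eLpNorm g 2 ν ^ 2 := by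
  rw [sq_eLpNorm_two_eq_lintegral, sq_eLpNorm_two_eq_lintegral]
  calc ∫⁻ x, ‖f x‖ₑ ^ 2 ∂μ ≤ ∫⁻ x, (∫⁻ t, K x t * ‖g t‖ₑ ∂ν) ^ 2 ∂μ :=
        lintegral_mono_ae (hf.mono fun x hx => by gcongr)
    _ ≤ A * B * ∫⁻ t, ‖g t‖ₑ ^ 2 ∂ν :=
        lintegral_sq_lintegral_kernel_mul_le hK hg.enorm hA hB

theorem eLpNorm_two_le_lintegral_mul_of_enorm_le_lintegral_sub {G E F : Type*}
    [MeasurableSpace G] [AddGroup G] [MeasurableAdd G] [MeasurableSub₂ G] [MeasurableNeg G]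
    [NormedAddCommGroup E] [NormedAddCommGroup F] {μ : Measure G} [SFinite μ]
    [μ.IsAddLeftInvariant] [μ.IsAddRightInvariant] [μ.IsNegInvariant]
    {s : Set G} {k : G → ℝ≥0∞} (hk : Measurable k) {f : G → E} {g : G → F}
    (hg : AEStronglyMeasurable g (μ.restrict s))
    (hf : ∀ᵐ x ∂μ.restrict s, ‖f x‖ₑ ≤ ∫⁻ t in s, k (x - t) * ‖g t‖ₑ ∂μ) :
    eLpNorm f 2 (μ.restrict s) ≤ (∫⁻ y, k y ∂μ) * eLpNorm g 2 (μ.restrict s) := by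
  have hsq := sq_eLpNorm_two_le_of_enorm_le_lintegral_kernel (K := fun x t => k (x - t))
    (hk.comp measurable_sub) (fun x => (setLIntegral_le_lintegral _ _).trans_eq
      (lintegral_sub_left_eq_self k x))
    (fun t => (setLIntegral_le_lintegral _ _).trans_eq (lintegral_sub_right_eq_self k t)) hg hf
  rwa [← sq, ← mul_pow, ENNReal.pow_le_pow_left_iff two_ne_zero] at hsq

noncomputable def expDecayKernel (b s : ℝ) : ℝ≥0∞ :=
  (Ici 0).indicator (fun s => ENNReal.ofReal (Real.exp (-b * s))) s

theorem measurable_expDecayKernel (b : ℝ) : Measurable (expDecayKernel b) :=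
  (ENNReal.measurable_ofReal.comp (by fun_prop)).indicator measurableSet_Ici

theorem lintegral_expDecayKernel {b : ℝ} (hb : 0 < b) :
    ∫⁻ s, expDecayKernel b s = ENNReal.ofReal b⁻¹ := by
  have hint : IntegrableOn (fun s => Real.exp (-b * s)) (Ioi 0) :=
    integrableOn_exp_mul_Ioi (neg_neg_of_pos hb) 0
  unfold expDecayKernel
  rw [lintegral_indicator measurableSet_Ici, ← restrict_Ioi_eq_restrict_Ici,
    ← ofReal_integral_eq_lintegral_ofReal hint (ae_of_all _ fun s => (Real.exp_pos _).le),
    integral_exp_mul_Ioi (neg_neg_of_pos hb), mul_zero, Real.exp_zero, neg_div, div_neg, neg_neg, one_div]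

theorem enorm_integral_mul_cexp_sub_le (g : ℝ → ℂ) (c : ℂ) {x : ℝ} (hx : 0 ≤ x) :
    ‖∫ t in (0 : ℝ)..x, g t * Complex.exp (((t - x : ℝ) : ℂ) * c)‖ₑ
      ≤ ∫⁻ t in Ioi 0, expDecayKernel c.re (x - t) * ‖g t‖ₑ := by
  rw [intervalIntegral.integral_of_le hx]
  calc _ ≤ ∫⁻ t in Ioc 0 x, ‖g t * Complex.exp (((t - x : ℝ) : ℂ) * c)‖ₑ :=
        enorm_integral_le_lintegral_enorm _
    _ = ∫⁻ t in Ioc 0 x, expDecayKernel c.re (x - t) * ‖g t‖ₑ := by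
        refine setLIntegral_congr_fun measurableSet_Ioc fun t ht => ?_
        rw [expDecayKernel, indicator_of_mem (mem_Ici.2 (sub_nonneg.2 ht.2)), enorm_mul,
          mul_comm, ← ofReal_norm (Complex.exp _), Complex.norm_exp,
          Complex.re_ofReal_mul]
        ring_nf
    _ ≤ _ := lintegral_mono_set Ioc_subset_Ioi_self

theorem hasDerivAt_integral_mul_cexp_sub {g : ℝ → ℂ} (c : ℂ) {x : ℝ}
    (hg : IntervalIntegrable g volume 0 x) (hmeas : StronglyMeasurableAtFilter g (𝓝 x))
    (hcont : ContinuousAt g x) :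
    HasDerivAt (fun y => ∫ t in (0 : ℝ)..y, g t * Complex.exp (((t - y : ℝ) : ℂ) * c))
      (g x - c * ∫ t in (0 : ℝ)..x, g t * Complex.exp (((t - x : ℝ) : ℂ) * c)) x := by
  have hfactor : ∀ y : ℝ, ∫ t in (0 : ℝ)..y, g t * Complex.exp (((t - y : ℝ) : ℂ) * c)
      = Complex.exp (-(y * c)) * ∫ t in (0 : ℝ)..y, g t * Complex.exp (t * c) := fun y => by
    rw [← intervalIntegral.integral_const_mul]
    refine intervalIntegral.integral_congr fun t _ => ?_
    rw [mul_left_comm, ← Complex.exp_add]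
    push_cast
    ring_nf
  have hexp : HasDerivAt (fun y : ℝ => Complex.exp (-(y * c)))
      (-c * Complex.exp (-(x * c))) x := by
    simpa [mul_comm] using (((hasDerivAt_id (x : ℂ)).mul_const c).neg.cexp).comp_ofReal
  obtain ⟨s, hs, hgs⟩ := hmeas
  have hprim : HasDerivAt (fun y => ∫ t in (0 : ℝ)..y, g t * Complex.exp (t * c))
      (g x * Complex.exp (x * c)) x :=
    intervalIntegral.integral_hasDerivAt_right (hg.mul_continuousOn (by fun_prop))
      ⟨s, hs, hgs.mul (by fun_prop : Continuous _).aestronglyMeasurable⟩ (hcont.mul (by fun_prop))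
  have hcancel : Complex.exp (-(x * c)) * Complex.exp (x * c) = 1 := by
    rw [← Complex.exp_add, neg_add_cancel, Complex.exp_zero]
  simp_rw [hfactor]
  refine (hexp.mul hprim).congr_deriv ?_
  linear_combination g x * hcancel

theorem MemLp.integrableOn_of_subset {α E : Type*} [MeasurableSpace α] [NormedAddCommGroup E]
    {μ : Measure α} {p : ℝ≥0∞} (hp : 1 ≤ p) {f : α → E} {s t : Set α}
    (hf : MemLp f p (μ.restrict s)) (hts : t ⊆ s) (ht : μ t ≠ ∞) : IntegrableOn f t μ :=
  have : IsFiniteMeasure (μ.restrict t) := isFiniteMeasure_restrict.2 ht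
  (hf.mono_measure (Measure.restrict_mono hts le_rfl)).integrable hp

/-- The right inverse `J⁻¹` of `J = F + h ∂ₓ` on the half line `x > 0`. -/
noncomputable def jRightInv (h : ℝ) (F : ℂ) (u : ℝ → ℂ) (x : ℝ) : ℂ :=
  (h : ℂ)⁻¹ * ∫ t in (0 : ℝ)..x, u t * Complex.exp (((t - x : ℝ) : ℂ) * F / (h : ℂ))

theorem jRightInv_apply (h : ℝ) (F : ℂ) (u : ℝ → ℂ) (x : ℝ) :
    jRightInv h F u x =
      (h : ℂ)⁻¹ * ∫ t in (0 : ℝ)..x, u t * Complex.exp (((t - x : ℝ) : ℂ) * (F / h)) := by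
  simp only [jRightInv, mul_div_assoc]

theorem hasDerivAt_jRightInv (h : ℝ) (F : ℂ) {u : ℝ → ℂ} {x : ℝ} (hx : 0 < x)
    (hu : ContinuousOn u (Ioi 0)) (hint : IntegrableOn u (Ioc 0 x)) :
    HasDerivAt (jRightInv h F u) ((h : ℂ)⁻¹ * (u x - F * jRightInv h F u x)) x := by
  have hderiv := (hasDerivAt_integral_mul_cexp_sub (F / h)
    ((intervalIntegrable_iff_integrableOn_Ioc_of_le hx.le).2 hint)
    (hu.stronglyMeasurableAtFilter isOpen_Ioi x hx) (hu.continuousAt (Ioi_mem_nhds hx))).const_mul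
    (h : ℂ)⁻¹
  simp only [← jRightInv_apply] at hderiv
  refine hderiv.congr_deriv ?_
  rw [jRightInv_apply]
  field_simp

theorem eLpNorm_jRightInv_le {h : ℝ} (hh : 0 < h) {F : ℂ} (ha : 0 < F.re) {u : ℝ → ℂ}
    (hu : AEStronglyMeasurable u (volume.restrict (Ioi 0))) :
    eLpNorm (jRightInv h F u) 2 (volume.restrict (Ioi 0))
      ≤ ENNReal.ofReal F.re⁻¹ * eLpNorm u 2 (volume.restrict (Ioi 0)) := by
  set k : ℝ → ℝ≥0∞ := fun s => ENNReal.ofReal h⁻¹ * expDecayKernel (F.re / h) s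
  have hmass : ∫⁻ s, k s = ENNReal.ofReal F.re⁻¹ := by
    rw [lintegral_const_mul _ (measurable_expDecayKernel _),
      lintegral_expDecayKernel (div_pos ha hh), ← ENNReal.ofReal_mul (by positivity)]
    congr 1
    field_simp
  have hpointwise : ∀ x ∈ Ioi (0 : ℝ),
      ‖jRightInv h F u x‖ₑ ≤ ∫⁻ t in Ioi 0, k (x - t) * ‖u t‖ₑ := fun x hx => by
    have hinv : ‖(h : ℂ)⁻¹‖ₑ = ENNReal.ofReal h⁻¹ := by
      rw [← ofReal_norm, norm_inv, Complex.norm_real, Real.norm_of_nonneg hh.le]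
    calc ‖jRightInv h F u x‖ₑ
        = ENNReal.ofReal h⁻¹ *
            ‖∫ t in (0 : ℝ)..x, u t * Complex.exp (((t - x : ℝ) : ℂ) * (F / h))‖ₑ := by
          rw [jRightInv_apply, enorm_mul, hinv]
      _ ≤ ENNReal.ofReal h⁻¹ * ∫⁻ t in Ioi 0, expDecayKernel (F / h).re (x - t) * ‖u t‖ₑ := by
          gcongr
          exact enorm_integral_mul_cexp_sub_le _ _ (le_of_lt hx)
      _ = ∫⁻ t in Ioi 0, k (x - t) * ‖u t‖ₑ := by
          rw [← lintegral_const_mul' _ _ ENNReal.ofReal_ne_top, Complex.div_ofReal_re]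
          simp only [k, mul_assoc]
  rw [← hmass]
  exact eLpNorm_two_le_lintegral_mul_of_enorm_le_lintegral_sub
    ((measurable_expDecayKernel _).const_mul _) hu
    ((ae_restrict_iff' measurableSet_Ioi).2 (ae_of_all _ hpointwise))

theorem eLpNorm_sub_smul_le {α 𝕜 E : Type*} [MeasurableSpace α] [NormedField 𝕜]
    [NormedAddCommGroup E] [NormedSpace 𝕜 E] {μ : Measure α} {p : ℝ≥0∞} (hp : 1 ≤ p)
    {u v : α → E} (hu : AEStronglyMeasurable u μ) (hv : AEStronglyMeasurable v μ) (c : 𝕜)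
    {C : ℝ} (hC : 0 ≤ C) (hvu : eLpNorm v p μ ≤ ENNReal.ofReal C * eLpNorm u p μ) :
    eLpNorm (u - c • v) p μ ≤ ENNReal.ofReal (1 + ‖c‖ * C) * eLpNorm u p μ := by
  calc eLpNorm (u - c • v) p μ ≤ eLpNorm u p μ + ‖c‖ₑ * eLpNorm v p μ := by
        rw [← eLpNorm_const_smul]
        exact eLpNorm_sub_le hu (hv.const_smul c) hp
    _ ≤ eLpNorm u p μ + ‖c‖ₑ * (ENNReal.ofReal C * eLpNorm u p μ) := by gcongr
    _ = ENNReal.ofReal (1 + ‖c‖ * C) * eLpNorm u p μ := by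
        rw [ENNReal.ofReal_add zero_le_one (by positivity), ENNReal.ofReal_mul (norm_nonneg _),
          ofReal_norm, ENNReal.ofReal_one]
        ring

/-- **Right inverse of `J = F + h ∂ₓ` on the half line, fixed frequency.**
Fix `h > 0` and `F ∈ ℂ` with `a := Re F > 0`. Let `u : (0,∞) → ℂ` be continuous and
square integrable, and `v x = h⁻¹ ∫₀ˣ u t · e^{(t-x)F/h} dt`. Then `v` is `C¹` on `(0,∞)`,
satisfies `F·v + h·v' = u`, and `‖v‖_{L²} ≤ a⁻¹‖u‖_{L²}`,
`‖h v'‖_{L²} ≤ (1 + |F|/a)‖u‖_{L²}`; in particular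
`‖v‖_{L²} + ‖h v'‖_{L²} ≤ (1 + a⁻¹ + |F|/a)‖u‖_{L²}`. -/
theorem stmt9 (h : ℝ) (hh : 0 < h) (F : ℂ) (ha : 0 < F.re)
    (u : ℝ → ℂ) (hu_cont : ContinuousOn u (Set.Ioi 0))
    (hu_L2 : MeasureTheory.MemLp u 2 (volume.restrict (Set.Ioi 0)))
    (v : ℝ → ℂ)
    (hv : ∀ x : ℝ, v x =
      (h : ℂ)⁻¹ * ∫ t in (0:ℝ)..x, u t * Complex.exp (((t - x : ℝ) : ℂ) * F / (h : ℂ))) :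
    ∃ v' : ℝ → ℂ,
      ContinuousOn v' (Set.Ioi 0) ∧
      (∀ x ∈ Set.Ioi (0:ℝ), HasDerivAt v (v' x) x) ∧
      (∀ x ∈ Set.Ioi (0:ℝ), F * v x + (h : ℂ) * v' x = u x) ∧
      MeasureTheory.MemLp v 2 (volume.restrict (Set.Ioi 0)) ∧
      eLpNorm v 2 (volume.restrict (Set.Ioi 0)) ≤
        ENNReal.ofReal (F.re)⁻¹ * eLpNorm u 2 (volume.restrict (Set.Ioi 0)) ∧
      eLpNorm (fun x => (h : ℂ) * v' x) 2 (volume.restrict (Set.Ioi 0)) ≤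
        ENNReal.ofReal (1 + ‖F‖ / F.re) * eLpNorm u 2 (volume.restrict (Set.Ioi 0)) ∧
      eLpNorm v 2 (volume.restrict (Set.Ioi 0)) +
          eLpNorm (fun x => (h : ℂ) * v' x) 2 (volume.restrict (Set.Ioi 0)) ≤
        ENNReal.ofReal (1 + (F.re)⁻¹ + ‖F‖ / F.re) *
          eLpNorm u 2 (volume.restrict (Set.Ioi 0)) := by
  obtain rfl : v = jRightInv h F u := funext hv
  set μ := volume.restrict (Ioi (0 : ℝ))
  set v' : ℝ → ℂ := fun x => (h : ℂ)⁻¹ * (u x - F * jRightInv h F u x)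
  have hderiv : ∀ x ∈ Ioi (0 : ℝ), HasDerivAt (jRightInv h F u) (v' x) x := fun x hx =>
    hasDerivAt_jRightInv h F hx hu_cont
      (MemLp.integrableOn_of_subset one_le_two hu_L2 Ioc_subset_Ioi_self measure_Ioc_lt_top.ne)
  have hv_cont : ContinuousOn (jRightInv h F u) (Ioi 0) := fun x hx =>
    (hderiv x hx).continuousAt.continuousWithinAt
  have hv_meas : AEStronglyMeasurable (jRightInv h F u) μ :=
    hv_cont.aestronglyMeasurable measurableSet_Ioi
  have hL2v := eLpNorm_jRightInv_le hh ha hu_L2.1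
  have hode : ∀ x, F * jRightInv h F u x + h * v' x = u x := fun x => by
    rw [mul_inv_cancel_left₀ (by exact_mod_cast hh.ne')]
    ring
  have hL2v' : eLpNorm (fun x => (h : ℂ) * v' x) 2 μ
      ≤ ENNReal.ofReal (1 + ‖F‖ / F.re) * eLpNorm u 2 μ := by
    have hhv' : (fun x => (h : ℂ) * v' x) = u - F • jRightInv h F u := by
      ext x; simp only [Pi.sub_apply, Pi.smul_apply, smul_eq_mul, ← hode x]; ring
    rw [hhv', div_eq_mul_inv]
    exact eLpNorm_sub_smul_le one_le_two hu_L2.1 hv_meas F (by positivity) hL2v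
  refine ⟨v', continuousOn_const.mul (hu_cont.sub (continuousOn_const.mul hv_cont)), hderiv,
    fun x _ => hode x, ⟨hv_meas, hL2v.trans_lt (ENNReal.mul_lt_top ENNReal.ofReal_lt_top hu_L2.2)⟩,
    hL2v, hL2v', ?_⟩
  refine (add_le_add hL2v hL2v').trans_eq ?_
  rw [← add_mul, ← ENNReal.ofReal_add (by positivity) (by positivity)]
  congr 2
  ring
end

section
/- Fix h > 0 and F ∈ ℂ with a := Re F > 0. Let u : (0,∞) → ℂ be continuous and square-integrable, and define v(x) = h^{-1}∫ₓ^∞ u(t)·e^{(x−t)·conj(F)/h} dt for x ≥ 0 (the integral converges since |e^{(x−t)conj(F)/h}| = e^{-(t−x)a/h} for t ≥ x). Then: (i) v is continuously differentiable on (0,∞) and satisfies conj(F)·v − h·v′ = u (i.e. v is a right inverse image of u under the adjoint operator J* = conj(F) − h∂_x); (ii) ‖v‖_{L²(0,∞)} ≤ a^{-1}·‖u‖_{L²(0,∞)}; and (iii) ‖h·v′‖_{L²(0,∞)} ≤ (1 + |F|/a)·‖u‖_{L²(0,∞)}. -/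
open MeasureTheory Set
open scoped ENNReal

/-!
With `c = conj F / h` one has `v = h⁻¹ R u` for
`R u x = ∫ₓ^∞ u t e^{(x-t)c} dt = e^{xc} ∫ₓ^∞ u t e^{-tc} dt`, which solves `c R u - (R u)' = u`.
Since `|e^{(x-t)c}| = e^{-(t-x) Re c}`, `|R u|` is dominated by the correlation of `|u|` with an
integrable kernel of mass `1 / Re c`, and the Schur test (Cauchy–Schwarz in `t`, then Tonelli)
gives `‖R u‖₂ ≤ ‖u‖₂ / Re c`. Then `h v' = conj F v - u` is bounded by the triangle inequality.
-/

section Schur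

variable {α β : Type*} [MeasurableSpace α] [MeasurableSpace β] {μ : Measure α} {ν : Measure β}

theorem ENNReal.sq_lintegral_mul_le_s10 {K f : β → ℝ≥0∞} (hK : AEMeasurable K ν)
    (hf : AEMeasurable f ν) :
    (∫⁻ t, K t * f t ∂ν) ^ 2 ≤ (∫⁻ t, K t ∂ν) * ∫⁻ t, K t * f t ^ 2 ∂ν := by
  have hholder := ENNReal.lintegral_mul_norm_pow_le hK (hK.mul (hf.pow_const 2))
    (p := (2 : ℕ)⁻¹) (q := (2 : ℕ)⁻¹) (by positivity) (by positivity) (by norm_num)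
  have hintegrand : ∀ t, K t ^ ((2 : ℕ)⁻¹ : ℝ) * (K t * f t ^ 2) ^ ((2 : ℕ)⁻¹ : ℝ) = K t * f t := by
    intro t
    rw [← ENNReal.mul_rpow_of_nonneg _ _ (by positivity),
      ← ENNReal.pow_rpow_inv_natCast two_ne_zero (K t * f t)]
    ring_nf
  simp only [Pi.mul_apply, hintegrand] at hholder
  calc (∫⁻ t, K t * f t ∂ν) ^ 2
      ≤ ((∫⁻ t, K t ∂ν) ^ ((2 : ℕ)⁻¹ : ℝ) * (∫⁻ t, K t * f t ^ 2 ∂ν) ^ ((2 : ℕ)⁻¹ : ℝ)) ^ 2 := by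
        gcongr
    _ = (∫⁻ t, K t ∂ν) * ∫⁻ t, K t * f t ^ 2 ∂ν := by
        rw [mul_pow, ENNReal.rpow_inv_natCast_pow two_ne_zero,
          ENNReal.rpow_inv_natCast_pow two_ne_zero]

theorem lintegral_sq_lintegral_mul_le_of_schur [SFinite μ] [SFinite ν] {K : α → β → ℝ≥0∞}
    (hK : Measurable (Function.uncurry K)) {f : β → ℝ≥0∞} (hf : AEMeasurable f ν) {A B : ℝ≥0∞}
    (hA : ∀ x, ∫⁻ t, K x t ∂ν ≤ A) (hB : ∀ t, ∫⁻ x, K x t ∂μ ≤ B) :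
    ∫⁻ x, (∫⁻ t, K x t * f t ∂ν) ^ 2 ∂μ ≤ A * B * ∫⁻ t, f t ^ 2 ∂ν := by
  have hKf : AEMeasurable (Function.uncurry fun x t => K x t * f t ^ 2) (μ.prod ν) :=
    hK.aemeasurable.mul (hf.pow_const 2).comp_snd
  have hKf_right : AEMeasurable (fun x => ∫⁻ t, K x t * f t ^ 2 ∂ν) μ :=
    hKf.lintegral_prod_right'
  have hKx : ∀ x, Measurable (K x) := fun x => hK.comp measurable_prodMk_left
  have hKt : ∀ t, Measurable fun x => K x t := fun t => hK.comp measurable_prodMk_right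
  calc ∫⁻ x, (∫⁻ t, K x t * f t ∂ν) ^ 2 ∂μ
      ≤ ∫⁻ x, A * ∫⁻ t, K x t * f t ^ 2 ∂ν ∂μ := by
        refine lintegral_mono fun x => ?_
        grw [ENNReal.sq_lintegral_mul_le_s10 (hKx x).aemeasurable hf, hA x]
    _ = A * ∫⁻ t, (∫⁻ x, K x t ∂μ) * f t ^ 2 ∂ν := by
        rw [lintegral_const_mul'' _ hKf_right, lintegral_lintegral_swap hKf]
        simp only [lintegral_mul_const _ (hKt _)]
    _ ≤ A * ∫⁻ t, B * f t ^ 2 ∂ν := by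
        gcongr with t
        exact hB t
    _ = A * B * ∫⁻ t, f t ^ 2 ∂ν := by
        rw [lintegral_const_mul'' _ (hf.pow_const 2), mul_assoc]

end Schur

theorem lintegral_sq_setLIntegral_mul_sub_le {G : Type*} [AddGroup G] [MeasurableSpace G]
    [MeasurableAdd₂ G] [MeasurableNeg G] {μ : Measure G} [SFinite μ] [μ.IsAddLeftInvariant]
    [μ.IsAddRightInvariant] [μ.IsNegInvariant] {κ : G → ℝ≥0∞} (hκ : Measurable κ) (s : Set G)
    {f : G → ℝ≥0∞} (hf : AEMeasurable f (μ.restrict s)) :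
    ∫⁻ x in s, (∫⁻ t in s, κ (t - x) * f t ∂μ) ^ 2 ∂μ ≤
      (∫⁻ y, κ y ∂μ) ^ 2 * ∫⁻ t in s, f t ^ 2 ∂μ := by
  rw [sq (∫⁻ y, κ y ∂μ)]
  refine lintegral_sq_lintegral_mul_le_of_schur (K := fun x t => κ (t - x))
    (hκ.comp (measurable_snd.sub measurable_fst)) hf (fun x => ?_) (fun t => ?_)
  · exact (setLIntegral_le_lintegral s _).trans_eq (lintegral_sub_right_eq_self κ x)
  · exact (setLIntegral_le_lintegral s _).trans_eq (lintegral_sub_left_eq_self κ t)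

theorem sq_eLpNorm_two {α ε : Type*} [MeasurableSpace α] [ENorm ε] (μ : Measure α) (f : α → ε) :
    eLpNorm f 2 μ ^ 2 = ∫⁻ x, ‖f x‖ₑ ^ 2 ∂μ := by
  simpa using eLpNorm_nnreal_pow_eq_lintegral (f := f) (μ := μ) (p := 2) two_ne_zero

theorem eLpNorm_two_le_of_lintegral_sq_le {α β ε ε' : Type*} [MeasurableSpace α]
    [MeasurableSpace β] [ENorm ε] [ENorm ε'] {μ : Measure α} {ν : Measure β} {f : α → ε}
    {g : β → ε'} {C : ℝ≥0∞} (h : ∫⁻ x, ‖f x‖ₑ ^ 2 ∂μ ≤ C ^ 2 * ∫⁻ y, ‖g y‖ₑ ^ 2 ∂ν) :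
    eLpNorm f 2 μ ≤ C * eLpNorm g 2 ν := by
  rwa [← ENNReal.pow_le_pow_left_iff two_ne_zero, mul_pow, sq_eLpNorm_two, sq_eLpNorm_two]

theorem eLpNorm_smul_sub_le {α 𝕜 E : Type*} [MeasurableSpace α] [NormedField 𝕜]
    [NormedAddCommGroup E] [NormedSpace 𝕜 E] {μ : Measure α} {p : ℝ≥0∞} (hp : 1 ≤ p) (a : 𝕜)
    {v u : α → E} (hv : AEStronglyMeasurable v μ) (hu : AEStronglyMeasurable u μ) {C : ℝ}
    (hC : 0 ≤ C) (hvu : eLpNorm v p μ ≤ ENNReal.ofReal C * eLpNorm u p μ) :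
    eLpNorm (a • v - u) p μ ≤ ENNReal.ofReal (1 + ‖a‖ * C) * eLpNorm u p μ := by
  grw [eLpNorm_sub_le (hv.const_smul a) hu hp, eLpNorm_const_smul, hvu, ← mul_assoc,
    ← ofReal_norm, ← ENNReal.ofReal_mul (norm_nonneg _), ENNReal.ofReal_add zero_le_one
    (by positivity), ENNReal.ofReal_one, add_mul, one_mul, add_comm]

theorem Real.lintegral_ofReal_exp_mul_Ioi {a : ℝ} (ha : a < 0) (c : ℝ) :
    ∫⁻ x in Ioi c, ENNReal.ofReal (Real.exp (a * x)) = ENNReal.ofReal (-Real.exp (a * c) / a) := by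
  have hint := exp_neg_integrableOn_Ioi c (neg_pos.2 ha)
  rw [neg_neg] at hint
  rw [← ofReal_integral_eq_lintegral_ofReal hint (ae_of_all _ fun x => (Real.exp_pos _).le),
    integral_exp_mul_Ioi ha]

theorem hasDerivAt_setIntegral_Ioi {E : Type*} [NormedAddCommGroup E] [NormedSpace ℝ E]
    [CompleteSpace E] {f : ℝ → E} {a x : ℝ} (hf : IntegrableOn f (Ioi a)) (hax : a < x)
    (hfx : ContinuousAt f x) : HasDerivAt (fun y => ∫ t in Ioi y, f t) (-f x) x := by
  have hprimitive : HasDerivAt (fun y => ∫ t in a..y, f t) (f x) x :=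
    intervalIntegral.integral_hasDerivAt_right
      ((intervalIntegrable_iff_integrableOn_Ioc_of_le hax.le).2 (hf.mono_set Ioc_subset_Ioi_self))
      ⟨Ioi a, Ioi_mem_nhds hax, hf.aestronglyMeasurable⟩ hfx
  refine (hprimitive.const_sub (∫ t in Ioi a, f t)).congr_of_eventuallyEq ?_
  filter_upwards [Ioi_mem_nhds hax] with y hy
  rw [← intervalIntegral.integral_Ioi_sub_Ioi hf hy.le, sub_sub_cancel]

theorem Complex.norm_exp_ofReal_mul (s : ℝ) (c : ℂ) : ‖exp (s * c)‖ = Real.exp (s * c.re) := by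
  rw [norm_exp, re_ofReal_mul]

theorem Complex.memLp_two_exp_neg_ofReal_mul {c : ℂ} (hc : 0 < c.re) (a : ℝ) :
    MemLp (fun t : ℝ => exp (-t * c)) 2 (volume.restrict (Ioi a)) := by
  have hcont : Continuous fun t : ℝ => exp (-t * c) := by fun_prop
  refine (memLp_two_iff_integrable_sq_norm hcont.aestronglyMeasurable).2 ?_
  refine (exp_neg_integrableOn_Ioi a (mul_pos two_pos hc)).congr_fun (fun t _ => ?_)
    measurableSet_Ioi
  rw [← ofReal_neg, norm_exp_ofReal_mul, sq, ← Real.exp_add]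
  ring_nf

theorem Complex.integrableOn_mul_exp_neg_ofReal_mul {c : ℂ} (hc : 0 < c.re) {u : ℝ → ℂ} {a : ℝ}
    (hu : MemLp u 2 (volume.restrict (Ioi a))) :
    IntegrableOn (fun t => u t * exp (-t * c)) (Ioi a) :=
  hu.integrable_mul (memLp_two_exp_neg_ofReal_mul hc a)

section HalfLineResolvent

open Complex

noncomputable def halfLineResolvent (c : ℂ) (u : ℝ → ℂ) (x : ℝ) : ℂ :=
  ∫ t in Ioi x, u t * exp (((x - t : ℝ) : ℂ) * c)

theorem halfLineResolvent_eq_exp_mul (c : ℂ) (u : ℝ → ℂ) (x : ℝ) :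
    halfLineResolvent c u x = exp (x * c) * ∫ t in Ioi x, u t * exp (-t * c) := by
  rw [halfLineResolvent, ← integral_const_mul]
  congr 1 with t
  rw [mul_left_comm, ← exp_add]
  push_cast
  ring_nf

theorem hasDerivAt_halfLineResolvent {c : ℂ} {u : ℝ → ℂ} {a x : ℝ}
    (hu : IntegrableOn (fun t => u t * exp (-t * c)) (Ioi a)) (hax : a < x)
    (hux : ContinuousAt u x) :
    HasDerivAt (halfLineResolvent c u) (c * halfLineResolvent c u x - u x) x := by
  have hexp : HasDerivAt (fun y : ℝ => exp (y * c)) (exp (x * c) * c) x := by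
    simpa using ((hasDerivAt_id (x : ℂ)).mul_const c).cexp.comp_ofReal
  have htail := hasDerivAt_setIntegral_Ioi hu hax (hux.mul (by fun_prop))
  have hcancel : exp (x * c) * (u x * exp (-x * c)) = u x := by
    rw [mul_left_comm, ← exp_add, neg_mul, add_neg_cancel, exp_zero, mul_one]
  rw [funext (halfLineResolvent_eq_exp_mul c u)]
  refine (hexp.mul htail).congr_deriv ?_
  rw [mul_neg, hcancel]
  ring

theorem enorm_halfLineResolvent_le (c : ℂ) (u : ℝ → ℂ) (x : ℝ) :
    ‖halfLineResolvent c u x‖ₑ ≤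
      ∫⁻ t in Ioi x, ENNReal.ofReal (Real.exp (-c.re * (t - x))) * ‖u t‖ₑ := by
  refine (enorm_integral_le_lintegral_enorm _).trans_eq
    (setLIntegral_congr_fun measurableSet_Ioi fun t _ => ?_)
  rw [enorm_mul, ← ofReal_norm (exp _), norm_exp_ofReal_mul, mul_comm]
  ring_nf

theorem eLpNorm_halfLineResolvent_le {c : ℂ} (hc : 0 < c.re) {u : ℝ → ℂ} {a : ℝ}
    (hu : AEStronglyMeasurable u (volume.restrict (Ioi a))) :
    eLpNorm (halfLineResolvent c u) 2 (volume.restrict (Ioi a)) ≤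
      ENNReal.ofReal c.re⁻¹ * eLpNorm u 2 (volume.restrict (Ioi a)) := by
  set κ : ℝ → ℝ≥0∞ := (Ioi 0).indicator fun s => ENNReal.ofReal (Real.exp (-c.re * s))
    with hκ_def
  have hκ : Measurable κ := (by fun_prop : Measurable fun s : ℝ =>
    ENNReal.ofReal (Real.exp (-c.re * s))).indicator measurableSet_Ioi
  have hκ_lintegral : ∫⁻ s, κ s = ENNReal.ofReal c.re⁻¹ := by
    rw [lintegral_indicator measurableSet_Ioi, Real.lintegral_ofReal_exp_mul_Ioi (by linarith)]
    congr 1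
    field_simp
    simp
  have hpointwise : ∀ x ∈ Ioi a,
      ‖halfLineResolvent c u x‖ₑ ≤ ∫⁻ t in Ioi a, κ (t - x) * ‖u t‖ₑ := by
    intro x hx
    calc ‖halfLineResolvent c u x‖ₑ
        ≤ ∫⁻ t in Ioi x, ENNReal.ofReal (Real.exp (-c.re * (t - x))) * ‖u t‖ₑ :=
          enorm_halfLineResolvent_le c u x
      _ = ∫⁻ t in Ioi x, κ (t - x) * ‖u t‖ₑ := setLIntegral_congr_fun measurableSet_Ioi
          fun t ht => by rw [hκ_def, indicator_of_mem (mem_Ioi.2 (sub_pos.2 ht))]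
      _ ≤ ∫⁻ t in Ioi a, κ (t - x) * ‖u t‖ₑ := lintegral_mono_set (Ioi_subset_Ioi hx.le)
  refine eLpNorm_two_le_of_lintegral_sq_le ?_
  calc ∫⁻ x in Ioi a, ‖halfLineResolvent c u x‖ₑ ^ 2
      ≤ ∫⁻ x in Ioi a, (∫⁻ t in Ioi a, κ (t - x) * ‖u t‖ₑ) ^ 2 := by
        refine setLIntegral_mono_ae' measurableSet_Ioi (ae_of_all _ fun x hx => ?_)
        grw [hpointwise x hx]
    _ ≤ ENNReal.ofReal c.re⁻¹ ^ 2 * ∫⁻ t in Ioi a, ‖u t‖ₑ ^ 2 := by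
        rw [← hκ_lintegral]
        exact lintegral_sq_setLIntegral_mul_sub_le hκ _ hu.enorm

end HalfLineResolvent

/-- **Right inverse of the adjoint `J* = conj(F) − h ∂ₓ` on the half line, fixed frequency.**
Fix `h > 0`, `F ∈ ℂ` with `a := Re F > 0`. For `u : (0,∞) → ℂ` continuous and square
integrable, define `v x = h⁻¹ ∫ₓ^∞ u t · e^{(x−t)·conj F/h} dt`. Then `v` is `C¹` on `(0,∞)`,
satisfies `conj(F)·v − h·v' = u` there, `‖v‖_{L²} ≤ a⁻¹‖u‖_{L²}`, and
`‖h v'‖_{L²} ≤ (1 + |F|/a)‖u‖_{L²}`. -/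
theorem stmt10 (h : ℝ) (hh : 0 < h) (F : ℂ) (ha : 0 < F.re)
    (u : ℝ → ℂ) (hu_cont : ContinuousOn u (Set.Ioi 0))
    (hu_L2 : MeasureTheory.MemLp u 2 (volume.restrict (Set.Ioi 0)))
    (v : ℝ → ℂ)
    (hv : ∀ x : ℝ, 0 ≤ x → v x =
      (h : ℂ)⁻¹ * ∫ t in Set.Ioi x,
        u t * Complex.exp (((x - t : ℝ) : ℂ) * (starRingEnd ℂ) F / (h : ℂ))) :
    ∃ v' : ℝ → ℂ,
      ContinuousOn v' (Set.Ioi 0) ∧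
      (∀ x ∈ Set.Ioi (0:ℝ), HasDerivAt v (v' x) x) ∧
      (∀ x ∈ Set.Ioi (0:ℝ), (starRingEnd ℂ) F * v x - (h : ℂ) * v' x = u x) ∧
      MeasureTheory.MemLp v 2 (volume.restrict (Set.Ioi 0)) ∧
      eLpNorm v 2 (volume.restrict (Set.Ioi 0)) ≤
        ENNReal.ofReal (F.re)⁻¹ * eLpNorm u 2 (volume.restrict (Set.Ioi 0)) ∧
      eLpNorm (fun x => (h : ℂ) * v' x) 2 (volume.restrict (Set.Ioi 0)) ≤
        ENNReal.ofReal (1 + ‖F‖ / F.re) * eLpNorm u 2 (volume.restrict (Set.Ioi 0)) := by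
  have hh' : (h : ℂ) ≠ 0 := Complex.ofReal_ne_zero.2 hh.ne'
  set c : ℂ := starRingEnd ℂ F / h with hc_def
  have hhc : (h : ℂ) * c = starRingEnd ℂ F := mul_div_cancel₀ _ hh'
  have hc_re : c.re = F.re / h := by simp [hc_def, Complex.div_ofReal_re]
  have hc : 0 < c.re := hc_re ▸ div_pos ha hh
  have hvR : ∀ x, 0 ≤ x → v x = (h : ℂ)⁻¹ * halfLineResolvent c u x := fun x hx => by
    simp_rw [hv x hx, halfLineResolvent, mul_div_assoc, hc_def]
  have hv_deriv : ∀ x ∈ Ioi (0 : ℝ), HasDerivAt v (c * v x - (h : ℂ)⁻¹ * u x) x := by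
    intro x hx
    have hR := hasDerivAt_halfLineResolvent (Complex.integrableOn_mul_exp_neg_ofReal_mul hc hu_L2)
      hx ((hu_cont x hx).continuousAt (Ioi_mem_nhds hx))
    refine ((hR.const_mul (h : ℂ)⁻¹).congr_of_eventuallyEq ?_).congr_deriv ?_
    · filter_upwards [Ioi_mem_nhds hx] with y hy using hvR y hy.le
    · rw [hvR x hx.le]
      ring
  have hv_cont : ContinuousOn v (Ioi 0) := fun x hx =>
    (hv_deriv x hx).continuousAt.continuousWithinAt
  have hv_meas : AEStronglyMeasurable v (volume.restrict (Ioi 0)) :=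
    hv_cont.aestronglyMeasurable measurableSet_Ioi
  have hv_L2 : eLpNorm v 2 (volume.restrict (Ioi 0)) ≤
      ENNReal.ofReal F.re⁻¹ * eLpNorm u 2 (volume.restrict (Ioi 0)) := by
    have hv_eq : v =ᵐ[volume.restrict (Ioi 0)] (h : ℂ)⁻¹ • halfLineResolvent c u := by
      filter_upwards [ae_restrict_mem measurableSet_Ioi] with x hx using hvR x hx.le
    grw [eLpNorm_congr_ae hv_eq, eLpNorm_const_smul, eLpNorm_halfLineResolvent_le hc hu_L2.1,
      ← mul_assoc, ← ofReal_norm, norm_inv, Complex.norm_real, Real.norm_of_nonneg hh.le,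
      ← ENNReal.ofReal_mul (by positivity), hc_re, inv_div, div_eq_mul_inv,
      inv_mul_cancel_left₀ hh.ne']
  have hhv' : (fun x => (h : ℂ) * (c * v x - (h : ℂ)⁻¹ * u x)) = starRingEnd ℂ F • v - u := by
    ext x
    simp [mul_sub, ← mul_assoc, hhc, hh']
  refine ⟨fun x => c * v x - (h : ℂ)⁻¹ * u x,
    (continuousOn_const.mul hv_cont).sub (continuousOn_const.mul hu_cont), hv_deriv,
    fun x _ => ?_, ⟨hv_meas, hv_L2.trans_lt (ENNReal.mul_lt_top ENNReal.ofReal_lt_top hu_L2.2)⟩,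
    hv_L2, ?_⟩
  · rw [congr_fun hhv' x, Pi.sub_apply, Pi.smul_apply, smul_eq_mul, sub_sub_cancel]
  · grw [hhv', eLpNorm_smul_sub_le one_le_two _ hv_meas hu_L2.1 (inv_nonneg.2 ha.le) hv_L2,
      RCLike.norm_conj, div_eq_mul_inv]
end

section
/- Fix h > 0 and F ∈ ℂ with a := Re F > 0, and let u ∈ L²(0,∞). Define g_u(x) = (2a/h)·∫₀^∞ u(t)·e^{-(t·conj(F) + x·F)/h} dt for x > 0. Then the defining integral converges absolutely, g_u is smooth on (0,∞), it satisfies F·g_u + h·g_u′ = 0 on (0,∞) (i.e. J g_u = 0 for J = F + h∂_x), and ‖g_u‖_{L²(0,∞)} ≤ ‖u‖_{L²(0,∞)}. -/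
open MeasureTheory

/-- **The kernel projection `g_u` of the operator `J = F + h ∂ₓ`, fixed frequency.**
Fix `h > 0`, `F ∈ ℂ` with `a := Re F > 0` and `u ∈ L²(0,∞)`. Let
`g x = (2a/h) ∫₀^∞ u t · e^{-(t·conj F + x·F)/h} dt`. Then the defining integral converges
absolutely, `g` is smooth on `(0,∞)`, satisfies `F·g + h·g' = 0` there, and
`‖g‖_{L²(0,∞)} ≤ ‖u‖_{L²(0,∞)}`. -/
theorem stmt11 (h : ℝ) (hh : 0 < h) (F : ℂ) (ha : 0 < F.re)
    (u : ℝ → ℂ) (hu : MeasureTheory.MemLp u 2 (volume.restrict (Set.Ioi 0)))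
    (g : ℝ → ℂ)
    (hg : ∀ x : ℝ, g x = ((2 * F.re / h : ℝ) : ℂ) *
      ∫ t in Set.Ioi (0:ℝ),
        u t * Complex.exp (-(((t : ℝ) : ℂ) * (starRingEnd ℂ) F + ((x : ℝ) : ℂ) * F) / (h : ℂ))) :
    (∀ x ∈ Set.Ioi (0:ℝ), MeasureTheory.Integrable
        (fun t : ℝ => u t *
          Complex.exp (-(((t : ℝ) : ℂ) * (starRingEnd ℂ) F + ((x : ℝ) : ℂ) * F) / (h : ℂ)))
        (volume.restrict (Set.Ioi 0))) ∧
    ContDiffOn ℝ (⊤ : ℕ∞) g (Set.Ioi 0) ∧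
    (∃ g' : ℝ → ℂ, (∀ x ∈ Set.Ioi (0:ℝ), HasDerivAt g (g' x) x) ∧
        ∀ x ∈ Set.Ioi (0:ℝ), F * g x + (h : ℂ) * g' x = 0) ∧
    eLpNorm g 2 (volume.restrict (Set.Ioi 0)) ≤ eLpNorm u 2 (volume.restrict (Set.Ioi 0)) := by
  have hh' : (h:ℂ) ≠ 0 := by exact_mod_cast hh.ne'
  have hb : 0 < F.re / h := div_pos ha hh
  have hb2 : 0 < 2 * (F.re / h) := by positivity
  set E : ℝ → ℂ := fun t => Complex.exp (-((t:ℂ) * (starRingEnd ℂ) F)/(h:ℂ)) with hE_def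
  have hEnorm : ∀ t : ℝ, ‖E t‖ = Real.exp (-(F.re/h) * t) := by
    intro t
    rw [hE_def]
    simp only [Complex.norm_exp, Complex.div_ofReal_re, Complex.neg_re,
      Complex.mul_re, Complex.ofReal_re, Complex.ofReal_im, Complex.conj_re, Complex.conj_im]
    ring_nf
  have hEcont : Continuous E := by
    apply Complex.continuous_exp.comp
    fun_prop
  have hEmem : MemLp E 2 (volume.restrict (Set.Ioi 0)) := by
    rw [memLp_two_iff_integrable_sq_norm hEcont.aestronglyMeasurable]
    have heq : ∀ t : ℝ, ‖E t‖^2 = Real.exp (-(2*(F.re/h)) * t) := by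
      intro t
      rw [hEnorm t, ← Real.exp_nat_mul]
      ring_nf
    refine (exp_neg_integrableOn_Ioi 0 hb2).congr_fun ?_ measurableSet_Ioi
    intro t _
    exact (heq t).symm
  have hUE : Integrable (fun t => u t * E t) (volume.restrict (Set.Ioi 0)) := by
    have hsm : MemLp (E • u) 1 (volume.restrict (Set.Ioi 0)) := by
      haveI : ENNReal.HolderTriple 2 2 1 := ⟨by rw [ENNReal.inv_two_add_inv_two, inv_one]⟩
      exact hu.smul hEmem
    rw [memLp_one_iff_integrable] at hsm
    exact hsm.congr (Filter.Eventually.of_forall fun t => by simp [mul_comm])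
  -- factorization of the kernel
  have h1 : ∀ x : ℝ, (fun t : ℝ => u t *
        Complex.exp (-(((t : ℝ) : ℂ) * (starRingEnd ℂ) F + ((x : ℝ) : ℂ) * F) / (h : ℂ)))
      = fun t : ℝ => (u t * E t) * Complex.exp (-((x:ℂ) * F)/(h:ℂ)) := by
    intro x
    funext t
    rw [hE_def]
    simp only
    rw [mul_assoc, ← Complex.exp_add]
    congr 2
    ring
  have hInt : ∀ x : ℝ, Integrable
      (fun t : ℝ => u t *
        Complex.exp (-(((t : ℝ) : ℂ) * (starRingEnd ℂ) F + ((x : ℝ) : ℂ) * F) / (h : ℂ)))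
      (volume.restrict (Set.Ioi 0)) := by
    intro x
    rw [h1 x]
    exact hUE.mul_const _
  set K : ℂ := ∫ t in Set.Ioi (0:ℝ), u t * E t with hK_def
  set M : ℂ := ((2 * F.re / h : ℝ) : ℂ) * K with hM_def
  have gfun : ∀ x : ℝ, g x = M * Complex.exp ((x:ℂ) * (-(F/(h:ℂ)))) := by
    intro x
    rw [hg x, h1 x, integral_mul_const, hM_def, hK_def]
    rw [mul_assoc]
    congr 2
    congr 1
    ring
  have hgG : g = fun x : ℝ => M * Complex.exp ((x:ℂ) * (-(F/(h:ℂ)))) := funext gfun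
  have hGnorm : ∀ x : ℝ, ‖g x‖ = ‖M‖ * Real.exp (-(F.re/h) * x) := by
    intro x
    rw [gfun x, norm_mul]
    congr 1
    simp only [Complex.norm_exp, Complex.mul_re, Complex.ofReal_re,
      Complex.ofReal_im, Complex.neg_re, Complex.neg_im, Complex.div_ofReal_re,
      Complex.div_ofReal_im]
    ring_nf
  refine ⟨fun x _ => hInt x, ?_, ?_, ?_⟩
  · -- smoothness
    rw [hgG]
    apply ContDiff.contDiffOn
    exact contDiff_const.mul (((Complex.ofRealCLM.contDiff).mul contDiff_const).cexp)
  · -- derivative and ODE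
    refine ⟨fun x => M * (Complex.exp ((x:ℂ) * (-(F/(h:ℂ)))) * (-(F/(h:ℂ)))), ?_, ?_⟩
    · intro x _
      rw [hgG]
      have h0 : HasDerivAt (fun y : ℝ => (y:ℂ) * (-(F/(h:ℂ)))) (-(F/(h:ℂ))) x := by
        simpa using (Complex.ofRealCLM.hasDerivAt (x := x)).mul_const (-(F/(h:ℂ)))
      exact (h0.cexp).const_mul M
    · intro x _
      rw [gfun x]
      field_simp
      ring
  · -- the L² bound
    set r : ℝ := 2*(F.re/h) with hr_def
    have hr : 0 < r := hb2
    have hu2 : Integrable (fun t : ℝ => ‖u t‖^2) (volume.restrict (Set.Ioi 0)) :=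
      (memLp_two_iff_integrable_sq_norm hu.1).mp hu
    set nu : ℝ := ∫ t in Set.Ioi (0:ℝ), ‖u t‖^2 with hnu_def
    have hnu0 : 0 ≤ nu := integral_nonneg fun t => sq_nonneg _
    have hexp_int : ∀ c : ℝ, 0 < c → ∫ t in Set.Ioi (0:ℝ), Real.exp (-c * t) = c⁻¹ := by
      intro c hc
      have h2 := integral_comp_mul_left_Ioi (fun y => Real.exp (-y)) 0 hc
      simp only [mul_zero, integral_exp_neg_Ioi, neg_zero, Real.exp_zero, smul_eq_mul,
        mul_one] at h2
      rw [← h2]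
      congr 1
      funext t
      rw [neg_mul]
    have hEsq : (fun t : ℝ => ‖E t‖^2) = fun t : ℝ => Real.exp (-r * t) := by
      funext t
      rw [hEnorm t, sq, ← Real.exp_add, hr_def]
      congr 1
      ring
    have hE2 : ∫ t in Set.Ioi (0:ℝ), ‖E t‖^2 = r⁻¹ := by
      rw [hEsq, hexp_int r hr]
    -- Cauchy-Schwarz for K
    have hof2 : (ENNReal.ofReal (2:ℝ)) = 2 := by norm_num
    have hrpow2 : ∀ y : ℝ, y ^ (2:ℝ) = y ^ 2 := by
      intro y
      rw [show (2:ℝ) = ((2:ℕ):ℝ) by norm_num, Real.rpow_natCast]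
    have hCS : ∫ t in Set.Ioi (0:ℝ), ‖u t‖ * ‖E t‖ ≤
        (∫ t in Set.Ioi (0:ℝ), ‖u t‖^(2:ℝ))^((1:ℝ)/2) *
        (∫ t in Set.Ioi (0:ℝ), ‖E t‖^(2:ℝ))^((1:ℝ)/2) := by
      refine integral_mul_norm_le_Lp_mul_Lq ?_ ?_ ?_
      · exact ⟨by norm_num, by norm_num, by norm_num⟩
      · rw [hof2]; exact hu
      · rw [hof2]; exact hEmem
    simp_rw [hrpow2] at hCS
    rw [← hnu_def, hE2] at hCS
    have hK_le : ‖K‖ ≤ nu^((1:ℝ)/2) * (r⁻¹)^((1:ℝ)/2) := by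
      refine le_trans ?_ hCS
      refine (norm_integral_le_integral_norm _).trans_eq ?_
      congr 1
      funext t
      exact norm_mul _ _
    have hMnorm : ‖M‖ = r * ‖K‖ := by
      rw [hM_def, norm_mul, Complex.norm_real, Real.norm_eq_abs,
        abs_of_pos (by positivity), hr_def]
      ring_nf
    have hM_le : ‖M‖ ≤ r * (nu^((1:ℝ)/2) * (r⁻¹)^((1:ℝ)/2)) := by
      rw [hMnorm]
      exact mul_le_mul_of_nonneg_left hK_le hr.le
    -- square it
    have hsq_half : ∀ y : ℝ, 0 ≤ y → (y^((1:ℝ)/2))^2 = y := by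
      intro y hy
      rw [← Real.rpow_natCast (y^((1:ℝ)/2)) 2, ← Real.rpow_mul hy]
      norm_num
    have hM2_le : ‖M‖^2 ≤ r^2 * (nu * r⁻¹) := by
      calc ‖M‖^2 ≤ (r * (nu^((1:ℝ)/2) * (r⁻¹)^((1:ℝ)/2)))^2 := by
            apply pow_le_pow_left₀ (norm_nonneg _) hM_le
        _ = r^2 * ((nu^((1:ℝ)/2))^2 * ((r⁻¹)^((1:ℝ)/2))^2) := by ring
        _ = r^2 * (nu * r⁻¹) := by
            rw [hsq_half nu hnu0, hsq_half r⁻¹ (inv_nonneg.mpr hr.le)]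
    have hfinal : ‖M‖^2 * r⁻¹ ≤ nu := by
      have h3 : ‖M‖^2 * r⁻¹ ≤ r^2 * (nu * r⁻¹) * r⁻¹ :=
        mul_le_mul_of_nonneg_right hM2_le (inv_nonneg.mpr hr.le)
      have h4 : r^2 * (nu * r⁻¹) * r⁻¹ = nu := by
        field_simp
      linarith [h3, h4.le]
    -- integral of ‖g‖²
    have hg2 : (fun x : ℝ => ‖g x‖^2) = fun x : ℝ => ‖M‖^2 * Real.exp (-r * x) := by
      funext x
      rw [hGnorm x, mul_pow, sq (Real.exp _), ← Real.exp_add, hr_def]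
      congr 2
      ring
    have hg2int : Integrable (fun x : ℝ => ‖g x‖^2) (volume.restrict (Set.Ioi 0)) := by
      rw [hg2]
      exact (exp_neg_integrableOn_Ioi 0 hr).const_mul _
    have hg2val : ∫ x in Set.Ioi (0:ℝ), ‖g x‖^2 = ‖M‖^2 * r⁻¹ := by
      rw [hg2, integral_const_mul, hexp_int r hr]
    -- ENNReal computations
    have key : ∀ z : ℂ, (‖z‖₊ : ENNReal) ^ (2:ℝ) = ENNReal.ofReal (‖z‖^2) := by
      intro z
      rw [← enorm_eq_nnnorm, ← ofReal_norm, ENNReal.ofReal_rpow_of_nonneg (norm_nonneg _)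
        (by norm_num : (0:ℝ) ≤ 2), hrpow2]
    rw [eLpNorm_eq_lintegral_rpow_enorm_toReal two_ne_zero ENNReal.ofNat_ne_top,
        eLpNorm_eq_lintegral_rpow_enorm_toReal two_ne_zero ENNReal.ofNat_ne_top]
    simp only [ENNReal.toReal_ofNat]
    apply ENNReal.rpow_le_rpow _ (by norm_num)
    calc ∫⁻ x in Set.Ioi (0:ℝ), (‖g x‖₊ : ENNReal)^(2:ℝ)
        = ENNReal.ofReal (∫ x in Set.Ioi (0:ℝ), ‖g x‖^2) := by
          rw [ofReal_integral_eq_lintegral_ofReal hg2int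
            (Filter.Eventually.of_forall fun x => sq_nonneg _)]
          simp_rw [key]
      _ ≤ ENNReal.ofReal nu := by
          rw [hg2val]
          exact ENNReal.ofReal_le_ofReal hfinal
      _ = ∫⁻ x in Set.Ioi (0:ℝ), (‖u x‖₊ : ENNReal)^(2:ℝ) := by
          rw [hnu_def, ofReal_integral_eq_lintegral_ofReal hu2
            (Filter.Eventually.of_forall fun x => sq_nonneg _)]
          simp_rw [key]
end
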